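/- Let x and x′ be involutions of W(B̃_n), and suppose the labelled cycle type (m, k_e, k_o, l) of x satisfies k_o > 0 or l > 0. Then x and x′ are conjugate in W(B̃_n) if and only if x′ has the same labelled cycle type as x. -/

import Mathlib

noncomputable section

open Equiv Finset

/-- Points `±1, …, ±n`, encoded as a sign together with an index. -/
abbrev Pt (n : ℕ) := ℤˣ × Fin n

/-- Negation of a point. -/
def negPt {n : ℕ} (x : Pt n) : Pt n := (-x.1, x.2)

/-- The hyperoctahedral group `H_n` of signed permutations: bijections `σ` of `{±1,…,±n}`
with `σ(-i) = -σ(i)`. -/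
def Hgrp (n : ℕ) : Subgroup (Equiv.Perm (Pt n)) where
  carrier := {σ | ∀ x, σ (negPt x) = negPt (σ x)}
  one_mem' := fun _ => rfl
  mul_mem' := by
    intro σ τ hσ hτ x
    have hσ' : ∀ y, σ (negPt y) = negPt (σ y) := hσ
    have hτ' : ∀ y, τ (negPt y) = negPt (τ y) := hτ
    simp only [Equiv.Perm.mul_apply]
    rw [hτ' x, hσ' (τ x)]
  inv_mem' := by
    intro σ hσ x
    have hσ' : ∀ y, σ (negPt y) = negPt (σ y) := hσ
    apply σ.injective
    have hinv : ∀ y, σ (σ⁻¹ y) = y := fun y => Equiv.apply_symm_apply σ y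
    rw [hinv, hσ', hinv]

lemma Hgrp_apply {n : ℕ} {σ : Equiv.Perm (Pt n)} (hσ : σ ∈ Hgrp n) (δ : ℤˣ) (k : Fin n) :
    σ (δ, k) = (δ * (σ (1, k)).1, (σ (1, k)).2) := by
  have hσ' : ∀ y, σ (negPt y) = negPt (σ y) := hσ
  rcases Int.units_eq_one_or δ with h | h <;> subst h
  · simp
  · have h2 := hσ' (1, k)
    simp only [negPt] at h2
    simpa using h2

/-- The (right) action of a signed permutation on integer vectors:
`(v^σ)_j = ε·v_i` whenever `σ(i) = ε j`. -/
def actV {n : ℕ} (σ : Equiv.Perm (Pt n)) (v : Fin n → ℤ) : Fin n → ℤ :=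
  fun j => ((σ (1, j)).1 : ℤ) * v (σ (1, j)).2

lemma actV_add {n : ℕ} (σ : Equiv.Perm (Pt n)) (a b : Fin n → ℤ) :
    actV σ (a + b) = actV σ a + actV σ b := by
  funext j; simp [actV, mul_add]

lemma actV_zero {n : ℕ} (σ : Equiv.Perm (Pt n)) : actV σ 0 = 0 := by
  funext j; simp [actV]

lemma actV_neg {n : ℕ} (σ : Equiv.Perm (Pt n)) (v : Fin n → ℤ) :
    actV σ (-v) = -actV σ v := by
  funext j; simp [actV]

lemma actV_one {n : ℕ} (v : Fin n → ℤ) : actV 1 v = v := by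
  funext j; simp [actV]

lemma actV_mul {n : ℕ} {σ : Equiv.Perm (Pt n)} (hσ : σ ∈ Hgrp n) (τ : Equiv.Perm (Pt n))
    (v : Fin n → ℤ) : actV (σ * τ) v = actV τ (actV σ v) := by
  funext j
  have h := Hgrp_apply hσ (τ (1, j)).1 (τ (1, j)).2
  rw [Prod.mk.eta] at h
  simp only [actV, Equiv.Perm.mul_apply, h]
  push_cast
  ring

/-- The affine Weyl group of type `C̃ₙ`: pairs `(σ, v)` with `σ` a signed permutation and
`v ∈ ℤⁿ`, with multiplication `(σ,v)(τ,u) = (στ, v^τ + u)`. -/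
@[ext] structure WC (n : ℕ) where
  sigma : Hgrp n
  vec : Fin n → ℤ

namespace WC

variable {n : ℕ}

instance : Mul (WC n) :=
  ⟨fun x y => ⟨x.sigma * y.sigma, actV (y.sigma : Equiv.Perm (Pt n)) x.vec + y.vec⟩⟩

instance : One (WC n) := ⟨⟨1, 0⟩⟩

instance : Inv (WC n) :=
  ⟨fun x => ⟨x.sigma⁻¹, -actV ((x.sigma⁻¹ : Hgrp n) : Equiv.Perm (Pt n)) x.vec⟩⟩

@[simp] lemma mul_sigma (x y : WC n) : (x * y).sigma = x.sigma * y.sigma := rfl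
@[simp] lemma mul_vec (x y : WC n) :
    (x * y).vec = actV (y.sigma : Equiv.Perm (Pt n)) x.vec + y.vec := rfl
@[simp] lemma one_sigma : (1 : WC n).sigma = 1 := rfl
@[simp] lemma one_vec : (1 : WC n).vec = 0 := rfl
@[simp] lemma inv_sigma (x : WC n) : (x⁻¹).sigma = x.sigma⁻¹ := rfl
@[simp] lemma inv_vec (x : WC n) :
    (x⁻¹).vec = -actV ((x.sigma⁻¹ : Hgrp n) : Equiv.Perm (Pt n)) x.vec := rfl

instance : Group (WC n) where
  mul_assoc a b c := by
    refine WC.ext ?_ ?_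
    · exact mul_assoc _ _ _
    · show actV (c.sigma : Equiv.Perm (Pt n))
          (actV (b.sigma : Equiv.Perm (Pt n)) a.vec + b.vec) + c.vec
        = actV (((b.sigma * c.sigma : Hgrp n)) : Equiv.Perm (Pt n)) a.vec
          + (actV (c.sigma : Equiv.Perm (Pt n)) b.vec + c.vec)
      rw [actV_add]
      have hc : (((b.sigma * c.sigma : Hgrp n)) : Equiv.Perm (Pt n))
          = (b.sigma : Equiv.Perm (Pt n)) * (c.sigma : Equiv.Perm (Pt n)) := rfl
      rw [hc, actV_mul b.sigma.2]
      abel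
  one_mul a := by
    refine WC.ext (one_mul _) ?_
    show actV (a.sigma : Equiv.Perm (Pt n)) 0 + a.vec = a.vec
    rw [actV_zero, zero_add]
  mul_one a := by
    refine WC.ext (mul_one _) ?_
    show actV ((1 : Hgrp n) : Equiv.Perm (Pt n)) a.vec + 0 = a.vec
    have h1 : ((1 : Hgrp n) : Equiv.Perm (Pt n)) = 1 := rfl
    rw [h1, actV_one, add_zero]
  inv_mul_cancel a := by
    refine WC.ext (inv_mul_cancel _) ?_
    show actV (a.sigma : Equiv.Perm (Pt n))
        (-actV ((a.sigma⁻¹ : Hgrp n) : Equiv.Perm (Pt n)) a.vec) + a.vec = 0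
    rw [actV_neg, ← actV_mul (a.sigma⁻¹ : Hgrp n).2]
    have h1 : ((a.sigma⁻¹ : Hgrp n) : Equiv.Perm (Pt n)) * (a.sigma : Equiv.Perm (Pt n)) = 1 := by
      rw [← Subgroup.coe_mul, inv_mul_cancel, Subgroup.coe_one]
    rw [h1, actV_one, neg_add_cancel]

end WC

/-- `Σw`: the coordinate sum of the translation part. -/
def sumV {n : ℕ} (x : WC n) : ℤ := ∑ i, x.vec i

/-- `minus(w)`: the number of `i ∈ {1,…,n}` with `σ(i) < 0`. -/
def minusCard {n : ℕ} (x : WC n) : ℕ :=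
  (Finset.univ.filter fun i : Fin n => ((x.sigma : Equiv.Perm (Pt n)) (1, i)).1 = -1).card
lemma permOf_bij {n : ℕ} (σ : Hgrp n) :
    Function.Bijective (fun i : Fin n => ((σ : Equiv.Perm (Pt n)) (1, i)).2) := by
  rw [Fintype.bijective_iff_injective_and_card]
  refine ⟨?_, rfl⟩
  intro i j hij
  simp only at hij
  have hmem : ∀ y, (σ : Equiv.Perm (Pt n)) (negPt y) = negPt ((σ : Equiv.Perm (Pt n)) y) := σ.2
  by_cases h1 : ((σ : Equiv.Perm (Pt n)) (1, i)).1 = ((σ : Equiv.Perm (Pt n)) (1, j)).1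
  · have heq : (σ : Equiv.Perm (Pt n)) (1, i) = (σ : Equiv.Perm (Pt n)) (1, j) :=
      Prod.ext h1 hij
    have h2 := (σ : Equiv.Perm (Pt n)).injective heq
    exact congrArg Prod.snd h2
  · exfalso
    have hfst : ((σ : Equiv.Perm (Pt n)) (1, i)).1 = -((σ : Equiv.Perm (Pt n)) (1, j)).1 := by
      rcases Int.units_eq_one_or ((σ : Equiv.Perm (Pt n)) (1, i)).1 with ha | ha <;>
        rcases Int.units_eq_one_or ((σ : Equiv.Perm (Pt n)) (1, j)).1 with hb | hb <;>
        first
          | exact absurd (ha.trans hb.symm) h1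
          | simp [ha, hb]
    have hne : (σ : Equiv.Perm (Pt n)) (1, i) = negPt ((σ : Equiv.Perm (Pt n)) (1, j)) :=
      Prod.ext hfst hij
    rw [← hmem (1, j)] at hne
    have h3 := (σ : Equiv.Perm (Pt n)).injective hne
    have h4 := congrArg Prod.fst h3
    simp only [negPt] at h4
    exact absurd h4 (by decide)

/-- The underlying (unsigned) permutation of `{1,…,n}` induced by a signed permutation. -/
def permOf {n : ℕ} (σ : Hgrp n) : Equiv.Perm (Fin n) :=
  Equiv.ofBijective _ (permOf_bij σ)

@[simp] lemma permOf_apply {n : ℕ} (σ : Hgrp n) (i : Fin n) :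
    permOf σ i = ((σ : Equiv.Perm (Pt n)) (1, i)).2 := rfl

lemma unitsCast_zmod2 (ε : ℤˣ) : (((ε : ℤ) : ZMod 2)) = 1 := by
  rcases Int.units_eq_one_or ε with h | h <;> subst h <;> decide

lemma sumV_mul {n : ℕ} (x y : WC n) :
    ((sumV (x * y) : ℤ) : ZMod 2) = ((sumV x : ℤ) : ZMod 2) + ((sumV y : ℤ) : ZMod 2) := by
  have key : ∀ (σ : Hgrp n) (v : Fin n → ℤ),
      (∑ i, ((actV (σ : Equiv.Perm (Pt n)) v i : ℤ) : ZMod 2)) = ∑ i, ((v i : ℤ) : ZMod 2) := by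
    intro σ v
    have hterm : ∀ i, ((actV (σ : Equiv.Perm (Pt n)) v i : ℤ) : ZMod 2)
        = ((v (permOf σ i) : ℤ) : ZMod 2) := by
      intro i
      show ((((((σ : Equiv.Perm (Pt n)) (1, i)).1 : ℤ)) * v (((σ : Equiv.Perm (Pt n)) (1, i)).2) : ℤ) : ZMod 2) = _
      push_cast
      rw [unitsCast_zmod2, one_mul]
      rfl
    rw [Finset.sum_congr rfl (fun i _ => hterm i)]
    exact Equiv.sum_comp (permOf σ) (fun i => ((v i : ℤ) : ZMod 2))
  have hvec : (x * y).vec = actV (y.sigma : Equiv.Perm (Pt n)) x.vec + y.vec := rfl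
  unfold sumV
  rw [hvec]
  have hsplit : (∑ i, (actV (y.sigma : Equiv.Perm (Pt n)) x.vec + y.vec) i)
      = (∑ i, actV (y.sigma : Equiv.Perm (Pt n)) x.vec i) + ∑ i, y.vec i := by
    rw [← Finset.sum_add_distrib]; rfl
  rw [hsplit]
  push_cast
  rw [key y.sigma x.vec]

lemma minusCard_one {n : ℕ} : minusCard (1 : WC n) = 0 := by
  unfold minusCard
  rw [Finset.card_eq_zero, Finset.filter_eq_empty_iff]
  intro i _
  show ¬ (((1 : Hgrp n) : Equiv.Perm (Pt n)) (1, i)).1 = -1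
  simp only [OneMemClass.coe_one, Equiv.Perm.one_apply]
  decide

lemma ite_units_mul (u w : ℤˣ) :
    ((if u * w = -1 then (1 : ZMod 2) else 0)) =
      (if u = -1 then (1 : ZMod 2) else 0) + (if w = -1 then (1 : ZMod 2) else 0) := by
  rcases Int.units_eq_one_or u with h | h <;> rcases Int.units_eq_one_or w with h' | h' <;>
    subst h <;> subst h' <;> decide

lemma minusCard_mul {n : ℕ} (x y : WC n) :
    ((minusCard (x * y) : ℕ) : ZMod 2) = (minusCard x : ZMod 2) + (minusCard y : ZMod 2) := by
  have hσ : ∀ i : Fin n, ((x * y).sigma : Equiv.Perm (Pt n)) (1, i)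
      = (x.sigma : Equiv.Perm (Pt n)) ((y.sigma : Equiv.Perm (Pt n)) (1, i)) := fun i => rfl
  unfold minusCard
  rw [Finset.card_filter, Finset.card_filter, Finset.card_filter]
  push_cast
  have step : ∀ i : Fin n,
      ((if (((x * y).sigma : Equiv.Perm (Pt n)) (1, i)).1 = -1 then (1 : ZMod 2) else 0))
      = (if ((y.sigma : Equiv.Perm (Pt n)) (1, i)).1 = -1 then (1 : ZMod 2) else 0)
        + (if ((x.sigma : Equiv.Perm (Pt n)) (1, permOf y.sigma i)).1 = -1
            then (1 : ZMod 2) else 0) := by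
    intro i
    rw [hσ i]
    have h := Hgrp_apply x.sigma.2 ((y.sigma : Equiv.Perm (Pt n)) (1, i)).1
      ((y.sigma : Equiv.Perm (Pt n)) (1, i)).2
    rw [Prod.mk.eta] at h
    rw [h]
    exact ite_units_mul _ _
  calc (∑ i : Fin n, if (((x * y).sigma : Equiv.Perm (Pt n)) (1, i)).1 = -1
          then (1 : ZMod 2) else 0)
      = ∑ i : Fin n, ((if ((y.sigma : Equiv.Perm (Pt n)) (1, i)).1 = -1 then (1 : ZMod 2) else 0)
        + (if ((x.sigma : Equiv.Perm (Pt n)) (1, permOf y.sigma i)).1 = -1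
            then (1 : ZMod 2) else 0)) := Finset.sum_congr rfl (fun i _ => step i)
    _ = (∑ i : Fin n, if ((y.sigma : Equiv.Perm (Pt n)) (1, i)).1 = -1 then (1 : ZMod 2) else 0)
        + ∑ i : Fin n, (if ((x.sigma : Equiv.Perm (Pt n)) (1, permOf y.sigma i)).1 = -1
            then (1 : ZMod 2) else 0) := Finset.sum_add_distrib
    _ = (∑ i : Fin n, if ((x.sigma : Equiv.Perm (Pt n)) (1, i)).1 = -1 then (1 : ZMod 2) else 0)
        + ∑ i : Fin n, (if ((y.sigma : Equiv.Perm (Pt n)) (1, i)).1 = -1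
            then (1 : ZMod 2) else 0) := by
          rw [add_comm]
          congr 1
          exact Equiv.sum_comp (permOf y.sigma)
            (fun k => if ((x.sigma : Equiv.Perm (Pt n)) (1, k)).1 = -1 then (1 : ZMod 2) else 0)
lemma even_int_iff_zmod {a : ℤ} : Even a ↔ ((a : ZMod 2) = 0) := by
  rw [ZMod.intCast_zmod_eq_zero_iff_dvd a 2, Int.even_iff]
  push_cast
  omega

lemma sumV_one {n : ℕ} : sumV (1 : WC n) = 0 := by simp [sumV]

/-- The affine Weyl group of type `B̃ₙ`: the elements `w` of `W(C̃ₙ)` with `Σw` even. -/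
def WB (n : ℕ) : Subgroup (WC n) where
  carrier := {w | Even (sumV w)}
  one_mem' := by
    show Even (sumV (1 : WC n))
    rw [sumV_one]
    exact Even.zero
  mul_mem' := by
    intro a b ha hb
    have ha' : ((sumV a : ℤ) : ZMod 2) = 0 := even_int_iff_zmod.mp ha
    have hb' : ((sumV b : ℤ) : ZMod 2) = 0 := even_int_iff_zmod.mp hb
    refine even_int_iff_zmod.mpr ?_
    rw [sumV_mul, ha', hb', add_zero]
  inv_mem' := by
    intro a ha
    have ha' : ((sumV a : ℤ) : ZMod 2) = 0 := even_int_iff_zmod.mp ha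
    refine even_int_iff_zmod.mpr ?_
    have h1 := sumV_mul a⁻¹ a
    rw [inv_mul_cancel, sumV_one, ha', add_zero] at h1
    simpa using h1.symm

lemma intModEq_two_iff {a b : ℤ} : a ≡ b [ZMOD 2] ↔ ((a : ZMod 2) = (b : ZMod 2)) :=
  (ZMod.intCast_eq_intCast_iff a b 2).symm

/-- The second copy `B̄(B̃ₙ)` of the affine Weyl group of type `B̃ₙ` inside `W(C̃ₙ)`:
elements with `Σw ≡ minus(w) (mod 2)`. -/
def Bbar (n : ℕ) : Subgroup (WC n) where
  carrier := {w | sumV w ≡ (minusCard w : ℤ) [ZMOD 2]}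
  one_mem' := by
    show sumV (1 : WC n) ≡ ((minusCard (1 : WC n) : ℤ)) [ZMOD 2]
    rw [sumV_one, minusCard_one]
    rfl
  mul_mem' := by
    intro a b ha hb
    have ha' := intModEq_two_iff.mp ha
    have hb' := intModEq_two_iff.mp hb
    refine intModEq_two_iff.mpr ?_
    rw [sumV_mul, ha', hb']
    push_cast at ha' hb' ⊢
    rw [minusCard_mul]
  inv_mem' := by
    intro a ha
    have ha' := intModEq_two_iff.mp ha
    refine intModEq_two_iff.mpr ?_
    have h1 := sumV_mul a⁻¹ a
    have h2 := minusCard_mul a⁻¹ a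
    rw [inv_mul_cancel, sumV_one] at h1
    rw [inv_mul_cancel, minusCard_one] at h2
    push_cast at ha' h1 h2 ⊢
    linear_combination h1.symm - h2.symm - ha'

/-- The affine Weyl group of type `D̃ₙ`, as the intersection of the two `B̃ₙ`'s. -/
def WD (n : ℕ) : Subgroup (WC n) := WB n ⊓ Bbar n

instance : DecidablePred (fun k : ℤ => Even k) := fun _ => decidable_of_iff _ Int.even_iff.symm
instance : DecidablePred (fun k : ℤ => Odd k) := fun _ => decidable_of_iff _ Int.odd_iff.symm

/-- The labelled cycle type `(m, k_e, k_o, l)` of an element of `W(C̃ₙ)` (intended for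
involutions): `m` is the number of 2-cycles of `σ`, `k_e` (resp. `k_o`) is the number of
`i` with `σ(i) = -i` whose label `v_i` is even (resp. odd), and `l` is the number of fixed
points of `σ`. -/
def lct {n : ℕ} (x : WC n) : ℕ × ℕ × ℕ × ℕ :=
  ((Finset.univ.filter fun i : Fin n => ((x.sigma : Equiv.Perm (Pt n)) (1, i)).2 ≠ i).card / 2,
   (Finset.univ.filter fun i : Fin n =>
      (x.sigma : Equiv.Perm (Pt n)) (1, i) = (-1, i) ∧ Even (x.vec i)).card,
   (Finset.univ.filter fun i : Fin n =>
      (x.sigma : Equiv.Perm (Pt n)) (1, i) = (-1, i) ∧ Odd (x.vec i)).card,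
   (Finset.univ.filter fun i : Fin n => (x.sigma : Equiv.Perm (Pt n)) (1, i) = (1, i)).card)

/-- `f(x)`: twice the sum of the labels over one chosen entry of each 2-cycle (we choose the
entry with the smaller index), plus the sum of the labels over the negative 1-cycles.  Only
its residue modulo 4 is ever used, and for involutions that residue does not depend on the
choice of entries. -/
def fval {n : ℕ} (x : WC n) : ℤ :=
  2 * (∑ i ∈ Finset.univ.filter
        (fun i : Fin n => i < ((x.sigma : Equiv.Perm (Pt n)) (1, i)).2), x.vec i)
  + ∑ i ∈ Finset.univ.filter
      (fun i : Fin n => (x.sigma : Equiv.Perm (Pt n)) (1, i) = (-1, i)), x.vec i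

/-- The commuting graph on a set `X` of elements of a group: vertices are the elements
of `X`, and distinct vertices are adjacent exactly when they commute.  When `X` is a
conjugacy class of involutions this is the commuting involution graph `C(G,X)`. -/
def commGraph {M : Type*} [Group M] (X : Set M) : SimpleGraph X where
  Adj a b := a ≠ b ∧ (a : M) * (b : M) = (b : M) * (a : M)
  symm := ⟨fun a b h => ⟨h.1.symm, h.2.symm⟩⟩
  loopless := ⟨fun a h => h.1 rfl⟩

/-- The conjugacy class of `x` under conjugation by a subgroup `G`. -/
def ConjugacyClassOf {M : Type*} [Group M] (G : Subgroup M) (x : M) : Set M :=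
  {y | ∃ g ∈ G, g⁻¹ * x * g = y}

/-- `X` is a conjugacy class of involutions of the subgroup `G`. -/
def IsInvolutionConjClass {M : Type*} [Group M] (G : Subgroup M) (X : Set M) : Prop :=
  ∃ x ∈ G, orderOf x = 2 ∧ X = ConjugacyClassOf G x

/-- Sign change at the single coordinate `k`. -/
def negAt {n : ℕ} (k : Fin n) : Equiv.Perm (Pt n) :=
  Function.Involutive.toPerm (fun p => if p.2 = k then (-p.1, p.2) else p) (by
    intro p
    by_cases h : p.2 = k <;> simp [h, Prod.ext_iff])

lemma negAt_mem {n : ℕ} (k : Fin n) : negAt k ∈ Hgrp n := by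
  intro p
  show (if (negPt p).2 = k then (-(negPt p).1, (negPt p).2) else negPt p)
      = negPt (if p.2 = k then (-p.1, p.2) else p)
  by_cases h : p.2 = k <;> simp [negPt, h]

/-- The positive transposition of the coordinates `a` and `b`. -/
def swapPos {n : ℕ} (a b : Fin n) : Equiv.Perm (Pt n) :=
  Equiv.prodCongr (Equiv.refl ℤˣ) (Equiv.swap a b)

lemma swapPos_mem {n : ℕ} (a b : Fin n) : swapPos a b ∈ Hgrp n := fun _ => rfl

/-- The negative transposition of the coordinates `a` and `b` (for `a ≠ b` it sends
`a ↦ -b` and `b ↦ -a`). -/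
def negSwap {n : ℕ} (a b : Fin n) : Equiv.Perm (Pt n) := negAt b * negAt a * swapPos a b

lemma negSwap_mem {n : ℕ} (a b : Fin n) : negSwap a b ∈ Hgrp n :=
  mul_mem (mul_mem (negAt_mem b) (negAt_mem a)) (swapPos_mem a b)

/-- Constructor for elements of `W(C̃ₙ)`. -/
def mkW {n : ℕ} (σ : Equiv.Perm (Pt n)) (h : σ ∈ Hgrp n) (v : Fin n → ℤ) : WC n := ⟨⟨σ, h⟩, v⟩

/-- The simple reflection `r₁ = (σ, 0)` with `σ(1) = -1` (take `k = 0`); more generally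
`(σ, 0)` with `σ(k) = -k`. -/
def rFirstGen (n : ℕ) (k : Fin n) : WC n := mkW (negAt k) (negAt_mem k) 0

/-- The simple reflections `rᵢ = (σ, 0)`, `2 ≤ i ≤ n`, where `σ` exchanges `a` and `b`
positively (take `a, b` adjacent). -/
def swapGen (n : ℕ) (a b : Fin n) : WC n := mkW (swapPos a b) (swapPos_mem a b) 0

/-- The simple reflection `r_{n+1} = (σ, eₙ)` with `σ(n) = -n` (take `k = n-1`). -/
def rLastGen (n : ℕ) (k : Fin n) : WC n := mkW (negAt k) (negAt_mem k) (Pi.single k 1)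

/-- The reflections `s = (σ, e_{n-1} + eₙ)` (take `a = n-2`, `b = n-1`) and
`t = (σ, e₁ + e₂)` (take `a = 0`, `b = 1`), where `σ(a) = -b`, `σ(b) = -a`. -/
def negSwapGen (n : ℕ) (a b : Fin n) : WC n :=
  mkW (negSwap a b) (negSwap_mem a b) (Pi.single a 1 + Pi.single b 1)

/-- The projection `π : W(C̃ₙ) → Hₙ`, `(σ, v) ↦ σ`. -/
def projHom (n : ℕ) : WC n →* Equiv.Perm (Pt n) where
  toFun x := (x.sigma : Equiv.Perm (Pt n))
  map_one' := rfl
  map_mul' _ _ := rfl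

/-- The action of a signed permutation on real vectors. -/
def actR {n : ℕ} (σ : Equiv.Perm (Pt n)) (u : Fin n → ℝ) : Fin n → ℝ :=
  fun j => (((σ (1, j)).1 : ℤ) : ℝ) * u (σ (1, j)).2

/-- The affine action of `w = (σ,v) ∈ W(C̃ₙ)` on `ℝⁿ`: `u ↦ u^σ + v`. -/
def affAct {n : ℕ} (x : WC n) : (Fin n → ℝ) → (Fin n → ℝ) :=
  fun u => actR (x.sigma : Equiv.Perm (Pt n)) u + fun i => ((x.vec i : ℤ) : ℝ)

/-- The affine involution `φ` of `ℝⁿ` with `φ(u)ᵢ = 1/2 - u_{n+1-i}`. -/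
def phiR (n : ℕ) : (Fin n → ℝ) → (Fin n → ℝ) := fun u i => 1 / 2 - u i.rev

/-!
Write `w ∈ W(C̃ₙ)` through its coordinates: the underlying permutation `p` of `{1,…,n}`, the
signs `s` and the labels `v`. Conjugating by `g` transports along `g.perm` the fixed-point data of
`x` (for each fixed point of `p`, its sign and the parity of its label), and `lct` is read off
from this data; hence `lct` is a conjugacy invariant. Conversely, for involutions with equal
`lct` the permutations have the same cycle type and the fixed-point data are equinumerous, so a
permutation `Q` matches them up; a further conjugation by a sign change and a translation brings
any involution to a normal form depending only on this data. This gives conjugacy in `W(C̃ₙ)`.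
To stay in `W(B̃ₙ)`, a positive fixed point (`l > 0`) or a negative one with odd label
(`k_o > 0`) yields an element of odd `Σ` commuting with `x` (a translation, resp. the
corresponding factor of `x`), which corrects a conjugator of odd `Σ`.
-/

section

variable {α : Type*} [Fintype α]

lemma card_filter_comp_equiv {β : Type*} [Fintype β] (e : α ≃ β) (P : β → Prop)
    [DecidablePred P] : #{j | P (e j)} = #{j | P j} := by
  simp only [← Fintype.card_subtype]
  exact Fintype.card_congr (e.subtypeEquiv fun _ => Iff.rfl)

lemma Equiv.Perm.cycleType_eq_replicate_of_sq_eq_one [DecidableEq α] {p : Perm α}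
    (hp : p ^ 2 = 1) : p.cycleType = Multiset.replicate (#p.support / 2) 2 := by
  have h := Equiv.Perm.cycleType_of_pow_prime_eq_one hp
  have hsum := p.sum_cycleType
  rw [h, Multiset.sum_replicate, smul_eq_mul] at hsum
  rw [h, ← hsum, Nat.mul_div_cancel _ two_pos]

lemma Equiv.Perm.isConj_of_sq_eq_one [DecidableEq α] {p q : Perm α} (hp : p ^ 2 = 1)
    (hq : q ^ 2 = 1) (h : #p.support = #q.support) : IsConj p q := by
  rw [Equiv.Perm.isConj_iff_cycleType_eq, cycleType_eq_replicate_of_sq_eq_one hp,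
    cycleType_eq_replicate_of_sq_eq_one hq, h]

lemma exists_perm_comp_eq_of_card_fiber {γ : Type*} [DecidableEq γ] (k k' : α → Option γ)
    (hnone : ∀ j, k j = none ↔ k' j = none)
    (hcard : ∀ c, #{j | k j = some c} = #{j | k' j = some c}) :
    ∃ Q : Perm α, (∀ j, k j = none → Q j = j) ∧ k' ∘ Q = k := by
  let e : ∀ d, {j // k j = d} ≃ {j // k' j = d}
    | none => Equiv.subtypeEquivRight hnone
    | some c => Fintype.equivOfCardEq (by simp only [Fintype.card_subtype, hcard])
  refine ⟨Equiv.ofFiberEquiv e, fun j hj => ?_, funext (Equiv.ofFiberEquiv_map e)⟩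
  -- generalize `k j` so that `e (k j)` reduces to the identity fibre map
  have key : ∀ d (hd : k j = d), d = none → (e d ⟨j, hd⟩ : α) = j := by
    rintro d hd rfl
    rfl
  exact key _ rfl hj

lemma exists_perm_conj_comp_eq [DecidableEq α] {γ : Type*} [DecidableEq γ] {p p' : Perm α}
    (hp : p ^ 2 = 1) (hp' : p' ^ 2 = 1) (k k' : α → Option γ)
    (hk : ∀ j, k j = none ↔ p j ≠ j) (hk' : ∀ j, k' j = none ↔ p' j ≠ j)
    (hcard : ∀ d, #{j | k j = d} = #{j | k' j = d}) :
    ∃ Q : Perm α, Q⁻¹ * p * Q = p' ∧ k ∘ Q = k' := by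
  -- conjugate `p` to `p'` (same cycle type), then permute the fixed points of `p'` among
  -- themselves to match the colourings
  have hsupp : #p.support = #p'.support := by
    simp only [Equiv.Perm.support, ← hk, ← hk', hcard]
  obtain ⟨c, hc⟩ := isConj_iff.1 (Equiv.Perm.isConj_of_sq_eq_one hp hp' hsupp)
  have hfix : ∀ j, p (c⁻¹ j) = c⁻¹ j ↔ p' j = j := by
    intro j
    rw [← hc]
    exact c.eq_symm_apply
  obtain ⟨Q, hQid, hQ⟩ := exists_perm_comp_eq_of_card_fiber k' (fun j => k (c⁻¹ j))
    (fun j => by simp only [hk, hk', ne_eq, hfix])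
    (fun d => by rw [card_filter_comp_equiv c⁻¹ (fun i => k i = some d), hcard])
  have hp'p' : ∀ j, p' (p' j) = j := fun j => by
    simpa [sq] using congr($hp' j)
  have hcomm : ∀ j, p' (Q j) = Q (p' j) := by
    intro j
    by_cases hj : p' j = j
    · have : k (c⁻¹ (Q j)) ≠ none := by
        rw [show k (c⁻¹ (Q j)) = k' j from congrFun hQ j, Ne, hk']
        exact not_not.2 hj
      rw [hj, ← hfix]
      exact not_not.1 (mt (hk _).2 this)
    · have hpj : p' (p' j) ≠ p' j := by rw [hp'p']; exact Ne.symm hj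
      rw [hQid j ((hk' j).2 hj), hQid (p' j) ((hk' _).2 hpj)]
  have hQp' : Q⁻¹ * p' * Q = p' := by
    ext j
    simp [hcomm]
  refine ⟨c⁻¹ * Q, ?_, ?_⟩
  · calc (c⁻¹ * Q)⁻¹ * p * (c⁻¹ * Q) = Q⁻¹ * (c * p * c⁻¹) * Q := by group
      _ = p' := by rw [hc, hQp']
  · rw [Equiv.Perm.coe_mul, ← Function.comp_assoc, ← hQ]
    rfl

end

def signedPerm {n : ℕ} (p : Perm (Fin n)) (s : Fin n → ℤˣ) : Perm (Pt n) where
  toFun x := (x.1 * s x.2, p x.2)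
  invFun x := (x.1 * s (p.symm x.2), p.symm x.2)
  left_inv x := by simp [mul_assoc, Int.units_mul_self]
  right_inv x := by simp [mul_assoc, Int.units_mul_self]

lemma signedPerm_mem {n : ℕ} (p : Perm (Fin n)) (s : Fin n → ℤˣ) :
    signedPerm p s ∈ Hgrp n :=
  fun x => by simp [signedPerm, negPt]

namespace WC

variable {n : ℕ}

def perm (x : WC n) : Perm (Fin n) := permOf x.sigma

def signs (x : WC n) (j : Fin n) : ℤˣ := ((x.sigma : Perm (Pt n)) (1, j)).1

lemma sigma_apply (x : WC n) (δ : ℤˣ) (j : Fin n) :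
    (x.sigma : Perm (Pt n)) (δ, j) = (δ * x.signs j, x.perm j) :=
  Hgrp_apply x.sigma.2 δ j

lemma ext' {x y : WC n} (hp : x.perm = y.perm) (hs : x.signs = y.signs) (hv : x.vec = y.vec) :
    x = y :=
  WC.ext (Subtype.ext (Equiv.ext fun ⟨δ, j⟩ => by rw [sigma_apply, sigma_apply, hp, hs])) hv

@[simp] lemma perm_one : (1 : WC n).perm = 1 := Equiv.ext fun _ => rfl

@[simp] lemma signs_one : (1 : WC n).signs = 1 := rfl

lemma sigma_one_apply (x : WC n) (j : Fin n) :
    (x.sigma : Perm (Pt n)) (1, j) = (x.signs j, x.perm j) := rfl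

lemma mul_sigma_one_apply (x y : WC n) (j : Fin n) :
    ((x * y).sigma : Perm (Pt n)) (1, j)
      = (y.signs j * x.signs (y.perm j), x.perm (y.perm j)) := by
  rw [mul_sigma, Subgroup.coe_mul, Perm.mul_apply, sigma_one_apply y, sigma_apply]

@[simp] lemma perm_mul (x y : WC n) : (x * y).perm = x.perm * y.perm :=
  Equiv.ext fun j => (congrArg Prod.snd (mul_sigma_one_apply x y j)).trans rfl

@[simp] lemma signs_mul (x y : WC n) (j : Fin n) :
    (x * y).signs j = y.signs j * x.signs (y.perm j) :=
  congrArg Prod.fst (mul_sigma_one_apply x y j)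

@[simp] lemma vec_mul (x y : WC n) (j : Fin n) :
    (x * y).vec j = y.signs j * x.vec (y.perm j) + y.vec j := rfl

lemma perm_inv (x : WC n) : x⁻¹.perm = x.perm⁻¹ :=
  eq_inv_of_mul_eq_one_left (by rw [← perm_mul, inv_mul_cancel, perm_one])

lemma perm_conj (g x : WC n) : (g⁻¹ * x * g).perm = g.perm⁻¹ * x.perm * g.perm := by
  simp [perm_inv]

lemma perm_sq_of_mul_self {x : WC n} (hx : x * x = 1) : x.perm ^ 2 = 1 := by
  rw [sq, ← perm_mul, hx, perm_one]

lemma perm_perm_of_mul_self {x : WC n} (hx : x * x = 1) (j : Fin n) : x.perm (x.perm j) = j :=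
  congr($(perm_sq_of_mul_self hx) j)

lemma signs_perm_of_mul_self {x : WC n} (hx : x * x = 1) (j : Fin n) :
    x.signs (x.perm j) = x.signs j := by
  have h := congrArg (fun z => z.signs j) hx
  rw [signs_mul, signs_one, Pi.one_apply] at h
  rw [eq_inv_of_mul_eq_one_right h, Int.units_inv_eq_self]

lemma vec_perm_of_mul_self {x : WC n} (hx : x * x = 1) (j : Fin n) :
    x.signs j * x.vec (x.perm j) + x.vec j = 0 :=
  congrFun (congrArg vec hx) j

def ofData (p : Perm (Fin n)) (s : Fin n → ℤˣ) (v : Fin n → ℤ) : WC n :=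
  mkW (signedPerm p s) (signedPerm_mem p s) v

@[simp] lemma perm_ofData (p : Perm (Fin n)) (s : Fin n → ℤˣ) (v : Fin n → ℤ) :
    (ofData p s v).perm = p :=
  Equiv.ext fun _ => rfl

@[simp] lemma signs_ofData (p : Perm (Fin n)) (s : Fin n → ℤˣ) (v : Fin n → ℤ) :
    (ofData p s v).signs = s :=
  funext fun _ => one_mul _

@[simp] lemma vec_ofData (p : Perm (Fin n)) (s : Fin n → ℤˣ) (v : Fin n → ℤ) :
    (ofData p s v).vec = v := rfl

lemma isConj_of_mul_eq_mul {x y g : WC n} (h : x * g = g * y) : IsConj x y :=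
  isConj_iff.2 ⟨g⁻¹, by rw [inv_inv, mul_assoc, h, ← mul_assoc, inv_mul_cancel, one_mul]⟩

def fixKind (x : WC n) (j : Fin n) : Option (ℤˣ × Bool) :=
  if x.perm j = j then some (x.signs j, decide (Even (x.vec j))) else none

lemma fixKind_eq_none_iff {x : WC n} {j : Fin n} : x.fixKind j = none ↔ x.perm j ≠ j := by
  unfold fixKind
  split_ifs with h <;> simp [h]

lemma fixKind_eq_some_iff {x : WC n} {j : Fin n} {σ : ℤˣ} {b : Bool} :
    x.fixKind j = some (σ, b) ↔
      x.perm j = j ∧ x.signs j = σ ∧ decide (Even (x.vec j)) = b := by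
  unfold fixKind
  split_ifs with h <;> simp [h]

lemma lct_eq (x : WC n) :
    lct x = (#{j | x.fixKind j = none} / 2, #{j | x.fixKind j = some (-1, true)},
      #{j | x.fixKind j = some (-1, false)}, #{j | ∃ b, x.fixKind j = some (1, b)}) := by
  simp only [lct, sigma_one_apply, fixKind_eq_none_iff, fixKind_eq_some_iff, Prod.mk.injEq,
    decide_eq_true_eq, decide_eq_false_iff_not, Int.not_even_iff_odd, exists_and_left,
    exists_eq', and_true]
  refine ⟨rfl, ?_, ?_, ?_⟩ <;> congr 1 <;> ext j <;>
    simp only [mem_filter, mem_univ, true_and] <;> tauto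

lemma fixKind_conj (g x : WC n) : (g⁻¹ * x * g).fixKind = x.fixKind ∘ g.perm := by
  set y := g⁻¹ * x * g
  have hgy : g * y = x * g := by simp [y, mul_assoc]
  have hp : ∀ j, g.perm (y.perm j) = x.perm (g.perm j) := fun j => by
    simpa using congrArg (fun z => z.perm j) hgy
  have hs : ∀ j, y.signs j * g.signs (y.perm j) = g.signs j * x.signs (g.perm j) := fun j => by
    simpa using congrArg (fun z => z.signs j) hgy
  have hv : ∀ j, (y.signs j : ℤ) * g.vec (y.perm j) + y.vec j
      = g.signs j * x.vec (g.perm j) + g.vec j := fun j => by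
    simpa using congrFun (congrArg vec hgy) j
  funext j
  by_cases hj : y.perm j = j
  · have hxj : x.perm (g.perm j) = g.perm j := by rw [← hp, hj]
    have hsj : y.signs j = x.signs (g.perm j) := by
      have := hs j
      rw [hj, mul_comm] at this
      exact mul_left_cancel this
    have hvj : Even (y.vec j) ↔ Even (x.vec (g.perm j)) := by
      have := hv j
      rw [hj] at this
      rcases Int.units_eq_one_or (g.signs j) with h1 | h1 <;>
        rcases Int.units_eq_one_or (y.signs j) with h2 | h2 <;>
        simp only [h1, h2, Units.val_one, Units.val_neg, one_mul, neg_one_mul] at this <;>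
        simp only [Int.even_iff] <;> omega
    simp [fixKind, hj, hxj, hsj, hvj]
  · have hxj : x.perm (g.perm j) ≠ g.perm j := by
      rw [← hp]
      exact fun h => hj (g.perm.injective h)
    simp [fixKind, hj, hxj]

lemma lct_conj (g x : WC n) : lct (g⁻¹ * x * g) = lct x := by
  rw [lct_eq, lct_eq, fixKind_conj]
  simp only [Function.comp_apply]
  rw [card_filter_comp_equiv g.perm (fun i => x.fixKind i = none),
    card_filter_comp_equiv g.perm (fun i => x.fixKind i = some (-1, true)),
    card_filter_comp_equiv g.perm (fun i => x.fixKind i = some (-1, false)),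
    card_filter_comp_equiv g.perm (fun i => ∃ b, x.fixKind i = some (1, b))]

/-- Positive 2-cycles with label `0`; fixed points with the sign recorded in `k` and label
`0` or `1` according to the recorded parity. -/
def normalForm (p : Perm (Fin n)) (k : Fin n → Option (ℤˣ × Bool)) : WC n :=
  ofData p (fun j => (k j).elim 1 Prod.fst) (fun j => (k j).elim 0 fun d => if d.2 then 0 else 1)

lemma isConj_normalForm {x : WC n} (hx : x * x = 1) :
    IsConj x (normalForm x.perm x.fixKind) := by
  have hpp := perm_perm_of_mul_self hx
  have hsp := signs_perm_of_mul_self hx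
  have hvp := vec_perm_of_mul_self hx
  -- `t` makes every 2-cycle positive; `u` then clears the labels on 2-cycles and reduces the
  -- labels of negative fixed points modulo `2`
  let t : Fin n → ℤˣ := fun j => if j < x.perm j then x.signs j else 1
  let u : Fin n → ℤ := fun j =>
    if j < x.perm j then -(x.signs j * x.vec j) else if x.perm j = j then -(x.vec j / 2) else 0
  refine isConj_of_mul_eq_mul (g := ofData 1 t u) (ext' (by simp [normalForm])
    (funext fun j => ?_) (funext fun j => ?_)) <;>
  simp only [signs_mul, vec_mul, perm_ofData, signs_ofData, vec_ofData, normalForm, fixKind,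
    Perm.one_apply, t, u] <;>
  rcases lt_trichotomy j (x.perm j) with h | h | h
  · have h1 : ¬ x.perm j < x.perm (x.perm j) := by rw [hpp]; exact h.not_gt
    simp [h, h1, h.ne']
  · simp [← h]
  · have h1 : x.perm j < x.perm (x.perm j) := by rw [hpp]; exact h
    simp [h.not_gt, h1, h.ne, hsp]
  · have h1 : ¬ x.perm j < x.perm (x.perm j) := by rw [hpp]; exact h.not_gt
    simp [h, h1, h.ne']
  · have hv := hvp j
    rw [← h] at hv
    rcases Int.units_eq_one_or (x.signs j) with hs | hs <;> simp [← h, hs] at hv ⊢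
    · simp [show x.vec j = 0 by omega]
    · split_ifs with hev <;> rw [Int.even_iff] at hev <;> omega
  · have h1 : x.perm j < x.perm (x.perm j) := by rw [hpp]; exact h
    simp [h.not_gt, h1, h.ne, hsp]
    linarith [hvp j]

lemma fixKind_ne_some_one_false {x : WC n} (hx : x * x = 1) (j : Fin n) :
    x.fixKind j ≠ some (1, false) := by
  rw [Ne, fixKind_eq_some_iff]
  rintro ⟨hj, hs, hodd⟩
  have hv := vec_perm_of_mul_self hx j
  rw [hj, hs, Units.val_one, one_mul] at hv
  simp only [decide_eq_false_iff_not, Int.not_even_iff_odd] at hodd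
  obtain ⟨r, hr⟩ := hodd
  omega

lemma card_fixKind_eq_of_lct_eq {x x' : WC n} (hx : x * x = 1) (hx' : x' * x' = 1)
    (h : lct x = lct x') (d : Option (ℤˣ × Bool)) :
    #{j | x.fixKind j = d} = #{j | x'.fixKind j = d} := by
  have hpos : ∀ y : WC n, y * y = 1 →
      #{j | ∃ b, y.fixKind j = some (1, b)} = #{j | y.fixKind j = some (1, true)} := by
    refine fun y hy => congrArg card (filter_congr fun j _ => ⟨?_, fun h => ⟨true, h⟩⟩)
    rintro ⟨_ | _, hb⟩
    exacts [absurd hb (fixKind_ne_some_one_false hy j), hb]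
  have heven : ∀ y : WC n, y * y = 1 → 2 ∣ #{j | y.fixKind j = none} := by
    simp only [fixKind_eq_none_iff]
    exact fun y hy => Equiv.Perm.two_dvd_card_support (perm_sq_of_mul_self hy)
  rw [lct_eq, lct_eq, hpos x hx, hpos x' hx'] at h
  simp only [Prod.mk.injEq] at h
  obtain ⟨hm, hke, hko, hl⟩ := h
  rcases d with _ | ⟨σ, _ | _⟩
  · have := heven x hx
    have := heven x' hx'
    omega
  · rcases Int.units_eq_one_or σ with rfl | rfl
    · simp [fixKind_ne_some_one_false hx, fixKind_ne_some_one_false hx']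
    · exact hko
  · rcases Int.units_eq_one_or σ with rfl | rfl
    exacts [hl, hke]

lemma isConj_of_lct_eq {x x' : WC n} (hx : x * x = 1) (hx' : x' * x' = 1)
    (h : lct x = lct x') : IsConj x x' := by
  obtain ⟨Q, hQp, hQk⟩ := exists_perm_conj_comp_eq (perm_sq_of_mul_self hx)
    (perm_sq_of_mul_self hx') x.fixKind x'.fixKind (fun _ => fixKind_eq_none_iff)
    (fun _ => fixKind_eq_none_iff) (card_fixKind_eq_of_lct_eq hx hx' h)
  set g := ofData Q 1 0
  have hy : (g⁻¹ * x * g) * (g⁻¹ * x * g) = 1 := by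
    rw [show (g⁻¹ * x * g) * (g⁻¹ * x * g) = g⁻¹ * (x * x) * g by group, hx, mul_one,
      inv_mul_cancel]
  have hnf : normalForm (g⁻¹ * x * g).perm (g⁻¹ * x * g).fixKind
      = normalForm x'.perm x'.fixKind := by
    rw [perm_conj, fixKind_conj, perm_ofData, hQp, hQk]
  have hxy : IsConj x (g⁻¹ * x * g) := isConj_of_mul_eq_mul (g := g) (by group)
  exact hxy.trans ((isConj_normalForm hy).trans (hnf ▸ (isConj_normalForm hx').symm))

lemma commute_ofData_single {x : WC n} {j : Fin n} (hj : x.perm j = j) {a : ℤ}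
    (ha : (x.signs j : ℤ) * (x.vec j - a) = x.vec j - a) :
    Commute x (ofData 1 (Pi.mulSingle j (x.signs j)) (Pi.single j a)) := by
  have hpj : ∀ i, i ≠ j → x.perm i ≠ j := fun i hi h =>
    hi (x.perm.injective (h.trans hj.symm))
  refine ext' (by simp) (funext fun i => ?_) (funext fun i => ?_) <;>
  simp only [signs_mul, vec_mul, perm_ofData, signs_ofData, vec_ofData, Perm.one_apply] <;>
  by_cases hi : i = j
  · subst hi
    rw [hj, mul_comm]
  · simp [hi, hpj i hi]
  · subst hi
    rw [hj, Pi.mulSingle_eq_same, Pi.single_eq_same]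
    linarith
  · simp [hi, hpj i hi]

lemma exists_commute_odd_sumV {x : WC n} {j : Fin n} (hj : x.perm j = j)
    (h : x.signs j = 1 ∨ Odd (x.vec j)) : ∃ w, Commute x w ∧ Odd (sumV w) := by
  rcases h with hs | hodd
  · exact ⟨_, commute_ofData_single hj (a := 1) (by simp [hs]), by simp [sumV]⟩
  · exact ⟨_, commute_ofData_single hj (a := x.vec j) (by simp), by simpa [sumV]⟩

lemma exists_fixed_of_lct {x : WC n} {m ke ko l : ℕ} (hl : lct x = (m, ke, ko, l))
    (hko : 0 < ko ∨ 0 < l) : ∃ j, x.perm j = j ∧ (x.signs j = 1 ∨ Odd (x.vec j)) := by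
  rw [lct_eq] at hl
  simp only [Prod.mk.injEq] at hl
  obtain ⟨-, -, rfl, rfl⟩ := hl
  rcases hko with h | h <;> obtain ⟨j, hj⟩ := Finset.card_pos.1 h <;>
    simp only [mem_filter, mem_univ, true_and, fixKind_eq_some_iff] at hj
  · simp only [decide_eq_false_iff_not, Int.not_even_iff_odd] at hj
    exact ⟨j, hj.1, Or.inr hj.2.2⟩
  · obtain ⟨b, hj, hs, -⟩ := hj
    exact ⟨j, hj, Or.inl hs⟩

lemma even_sumV_mul_of_odd {w g : WC n} (hw : Odd (sumV w)) (hg : Odd (sumV g)) :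
    Even (sumV (w * g)) := by
  rw [even_int_iff_zmod, sumV_mul, ZMod.intCast_eq_one_iff_odd.2 hw,
    ZMod.intCast_eq_one_iff_odd.2 hg]
  decide

end WC

theorem WB_conjugacy_lct_general (n : ℕ) (x x' : WC n)
    (h2 : orderOf x = 2) (h2' : orderOf x' = 2)
    (m ke ko l : ℕ) (hl : lct x = (m, ke, ko, l)) (hko : 0 < ko ∨ 0 < l) :
    (∃ g ∈ WB n, g⁻¹ * x * g = x') ↔ lct x' = lct x := by
  have hsq : ∀ y : WC n, orderOf y = 2 → y * y = 1 := fun y hy => by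
    rw [← sq, ← hy, pow_orderOf_eq_one]
  refine ⟨fun ⟨g, _, hg⟩ => hg ▸ WC.lct_conj g x, fun h => ?_⟩
  obtain ⟨c, rfl⟩ := isConj_iff.1 (WC.isConj_of_lct_eq (hsq x h2) (hsq x' h2') h.symm)
  obtain ⟨j, hj, hjodd⟩ := WC.exists_fixed_of_lct hl hko
  obtain ⟨w, hw, hodd⟩ := WC.exists_commute_odd_sumV hj hjodd
  by_cases hc : Even (sumV c⁻¹)
  · exact ⟨c⁻¹, hc, by group⟩
  · refine ⟨w * c⁻¹, WC.even_sumV_mul_of_odd hodd (Int.not_even_iff_odd.1 hc), ?_⟩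
    calc (w * c⁻¹)⁻¹ * x * (w * c⁻¹) = c * (w⁻¹ * (x * w)) * c⁻¹ := by group
      _ = c * x * c⁻¹ := by rw [hw.eq, inv_mul_cancel_left]

theorem WB_conjugacy_lct (n : ℕ) (x x' : WC n) (hx : x ∈ WB n) (hx' : x' ∈ WB n)
    (h2 : orderOf x = 2) (h2' : orderOf x' = 2)
    (m ke ko l : ℕ) (hl : lct x = (m, ke, ko, l)) (hko : 0 < ko ∨ 0 < l) :
    (∃ g ∈ WB n, g⁻¹ * x * g = x') ↔ lct x' = lct x :=
  WB_conjugacy_lct_general n x x' h2 h2' m ke ko l hl hko
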